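/- arXiv:1905.02233 — 2 statements merged into one kernel-verified Lean document; each statement's English description precedes it below -/
import Mathlib

section
/- Let 1 ≤ m < n with α = m/n, and let i be an integer with 1 ≤ i ≤ √m − 1 and θ ∈ (0,2π]. Then ∫_{A_{i,θ}} m·f_α(z) dλ(z) = i² + (θ/(2π))(2i+1), where λ is Lebesgue measure on ℂ; equivalently, m·μ_α(A_{i,θ}) = i² + (θ/(2π))(2i+1). -/
open MeasureTheory Matrix Finset

noncomputable section

instance (n : ℕ) : MeasurableSpace (Matrix (Fin n) (Fin n) ℂ) :=
  inferInstanceAs (MeasurableSpace (Fin n → Fin n → ℂ))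

/-- The top-left `m × m` block of an `n × n` unitary matrix. -/
def truncation (n m : ℕ) (h : m ≤ n) (U : Matrix.unitaryGroup (Fin n) ℂ) :
    Matrix (Fin m) (Fin m) ℂ :=
  Matrix.of fun i j => (U : Matrix (Fin n) (Fin n) ℂ) (Fin.castLE h i) (Fin.castLE h j)

/-- The eigenvalues (with multiplicity) of the truncation. -/
def eigs (n m : ℕ) (h : m ≤ n) (U : Matrix.unitaryGroup (Fin n) ℂ) : Multiset ℂ :=
  ((truncation n m h U).charpoly).roots

open Classical in
/-- The number of elements of a multiset (with multiplicity) lying in a set `A`. -/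
def countIn (s : Multiset ℂ) (A : Set ℂ) : ℕ :=
  Multiset.card (s.filter fun z => z ∈ A)

/-- `r_i = i / sqrt (n - m + i²)`. -/
def rr (n m i : ℕ) : ℝ := i / Real.sqrt ((n : ℝ) - m + (i : ℝ) ^ 2)

/-- The argument of a complex number, normalized to take values in `(0, 2π]`. -/
def argIn (z : ℂ) : ℝ :=
  if Complex.arg z ≤ 0 then Complex.arg z + 2 * Real.pi else Complex.arg z

/-- The set `A_{i,θ}`. -/
def Aiθ (n m i : ℕ) (θ : ℝ) : Set ℂ :=
  {z | ‖z‖ < rr n m i} ∪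
    {z | rr n m i ≤ ‖z‖ ∧ ‖z‖ < rr n m (i + 1) ∧
      0 < argIn z ∧ argIn z < θ}

/-- The eigenvalue counting function `N_{i,θ}`. -/
def NN (n m : ℕ) (h : m ≤ n) (i : ℕ) (θ : ℝ) (U : Matrix.unitaryGroup (Fin n) ℂ) : ℕ :=
  countIn (eigs n m h U) (Aiθ n m i θ)

/-- `ε_m = sqrt (2 log (m+1) / m)`. -/
def epsm (m : ℕ) : ℝ := Real.sqrt (2 * Real.log ((m : ℝ) + 1) / m)

/-- The density `f_α(z) = (1-α)/(πα(1-|z|²)²)` for `0 < |z| < √α`, and `0` otherwise. -/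
def fα (α : ℝ) (z : ℂ) : ℝ :=
  if 0 < ‖z‖ ∧ ‖z‖ < Real.sqrt α then
    (1 - α) / (Real.pi * α * (1 - ‖z‖ ^ 2) ^ 2)
  else 0

/-- The measure `μ_α` on `ℂ` with density `f_α` with respect to Lebesgue measure. -/
def μα (α : ℝ) : Measure ℂ :=
  volume.withDensity fun z => ENNReal.ofReal (fα α z)


/-!
In polar coordinates `m f_α` is the radial density `(n - m) / (π (1 - r²)²)` on the disc of
radius `r_{i+1} ≤ √α`, and `r / (1 - r²)²` has primitive `1 / (2 (1 - r²))`. Since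
`1 / (1 - r_j²) = 1 + j² / (n - m)`, the disc `|z| < r_i` has mass `i²`, and the annulus
`r_i ≤ |z| < r_{i+1}` has mass `(i + 1)² - i² = 2i + 1`, of which the sector of angle `θ`
carries the fraction `θ / (2π)`.
-/

open Real Set

theorem integral_Ioo_div_one_sub_sq_sq {a b : ℝ} (ha : -1 < a) (hab : a ≤ b) (hb : b < 1) :
    ∫ r in Ioo a b, r / (1 - r ^ 2) ^ 2 = ((1 - b ^ 2)⁻¹ - (1 - a ^ 2)⁻¹) / 2 := by
  have hne : ∀ x ∈ uIcc a b, 1 - x ^ 2 ≠ 0 := by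
    intro x hx
    rw [uIcc_of_le hab] at hx
    nlinarith [hx.1, hx.2]
  have hderiv : ∀ x ∈ uIcc a b,
      HasDerivAt (fun r => (1 - r ^ 2)⁻¹ / 2) (x / (1 - x ^ 2) ^ 2) x := by
    intro x hx
    refine ((((hasDerivAt_pow 2 x).const_sub 1).inv (hne x hx)).div_const 2).congr_deriv ?_
    field_simp
    ring
  have hint : IntervalIntegrable (fun r => r / (1 - r ^ 2) ^ 2) volume a b :=
    (continuousOn_id.div (by fun_prop) fun x hx => pow_ne_zero 2 (hne x hx)).intervalIntegrable
  rw [integral_Ioc_eq_integral_Ioo.symm, ← intervalIntegral.integral_of_le hab,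
    intervalIntegral.integral_eq_sub_of_hasDerivAt hderiv hint]
  ring

def polarRect (R Φ : Set ℝ) : Set ℂ := {z | ‖z‖ ∈ R ∧ Complex.arg z ∈ Φ}

theorem measurableSet_polarRect {R Φ : Set ℝ} (hR : MeasurableSet R) (hΦ : MeasurableSet Φ) :
    MeasurableSet (polarRect R Φ) :=
  (measurable_norm hR).inter (Complex.measurable_arg hΦ)

theorem setIntegral_comp_norm_polarRect (g : ℝ → ℝ) {R Φ : Set ℝ} (hR : MeasurableSet R)
    (hΦ : MeasurableSet Φ) :
    ∫ z in polarRect R Φ, g ‖z‖ = (∫ r in R ∩ Ioi 0, r * g r) * volume.real (Φ ∩ Ioo (-π) π) := by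
  have hpolar : EqOn
      (fun p : ℝ × ℝ => p.1 • (polarRect R Φ).indicator (g ‖·‖) (Complex.polarCoord.symm p))
      ((R ×ˢ Φ).indicator fun p => p.1 * g p.1 * 1) polarCoord.target := by
    rintro ⟨r, φ⟩ ⟨hr, hφ⟩
    have hnorm : ‖Complex.polarCoord.symm (r, φ)‖ = r := by
      rw [Complex.norm_polarCoord_symm, abs_of_pos hr]
    have harg : Complex.arg (Complex.polarCoord.symm (r, φ)) = φ := by
      rw [Complex.polarCoord_symm_apply, Complex.ofReal_cos, Complex.ofReal_sin]
      exact Complex.arg_mul_cos_add_sin_mul_I hr (Ioo_subset_Ioc_self hφ)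
    have hiff : Complex.polarCoord.symm (r, φ) ∈ polarRect R Φ ↔ (r, φ) ∈ R ×ˢ Φ := by
      rw [polarRect, mem_ofPred_eq, hnorm, harg, mem_prod]
    dsimp only
    by_cases hmem : (r, φ) ∈ R ×ˢ Φ
    · rw [indicator_of_mem (hiff.mpr hmem), indicator_of_mem hmem, hnorm, smul_eq_mul, mul_one]
    · rw [indicator_of_notMem (mt hiff.mp hmem), indicator_of_notMem hmem, smul_zero]
  have htarget : polarCoord.target ∩ R ×ˢ Φ = (R ∩ Ioi 0) ×ˢ (Φ ∩ Ioo (-π) π) := by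
    rw [polarCoord_target, prod_inter_prod, Set.inter_comm (Ioi 0), Set.inter_comm (Ioo _ _)]
  rw [← integral_indicator (measurableSet_polarRect hR hΦ),
    ← Complex.integral_comp_polarCoord_symm,
    setIntegral_congr_fun polarCoord.open_target.measurableSet hpolar,
    setIntegral_indicator (hR.prod hΦ), htarget, Measure.volume_eq_prod,
    setIntegral_prod_mul (fun r => r * g r) fun _ => (1 : ℝ), setIntegral_const, smul_eq_mul,
    mul_one]

def sectorArgs (θ : ℝ) : Set ℝ := Ioo 0 θ ∪ Ioo (-π) (θ - 2 * π)

theorem measurableSet_sectorArgs (θ : ℝ) : MeasurableSet (sectorArgs θ) :=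
  measurableSet_Ioo.union measurableSet_Ioo

theorem argIn_mem_Ioo_iff (z : ℂ) (θ : ℝ) : argIn z ∈ Ioo 0 θ ↔ Complex.arg z ∈ sectorArgs θ := by
  have := Complex.neg_pi_lt_arg z
  have := pi_pos
  unfold argIn sectorArgs
  split_ifs <;> simp only [Set.mem_Ioo, Set.mem_union] <;> grind

theorem volume_real_sectorArgs_inter {θ : ℝ} (hθ0 : 0 < θ) (hθ : θ ≤ 2 * π) :
    volume.real (sectorArgs θ ∩ Ioo (-π) π) = θ := by
  have := pi_pos
  unfold sectorArgs
  rcases le_or_gt θ π with hθπ | hπθ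
  · have hθ_eq : (Ioo 0 θ ∪ Ioo (-π) (θ - 2 * π)) ∩ Ioo (-π) π = Ioo 0 θ := by
      ext x
      simp only [mem_inter_iff, Set.mem_union, Set.mem_Ioo]
      grind
    rw [hθ_eq, Real.volume_real_Ioo_of_le hθ0.le, sub_zero]
  · have hθ_eq : (Ioo 0 θ ∪ Ioo (-π) (θ - 2 * π)) ∩ Ioo (-π) π
        = Ioo 0 π ∪ Ioo (-π) (θ - 2 * π) := by
      ext x
      simp only [mem_inter_iff, Set.mem_union, Set.mem_Ioo]
      grind
    have hdisj : Disjoint (Ioo 0 π) (Ioo (-π) (θ - 2 * π)) :=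
      Set.disjoint_left.mpr fun x h h' => by linarith [h.1, h'.2]
    rw [hθ_eq, measureReal_union hdisj measurableSet_Ioo measure_Ioo_lt_top.ne
      measure_Ioo_lt_top.ne, Real.volume_real_Ioo_of_le pi_pos.le,
      Real.volume_real_Ioo_of_le (by linarith)]
    ring

theorem fα_ofReal_norm (α : ℝ) (z : ℂ) : fα α (‖z‖ : ℂ) = fα α z := by
  simp only [fα, Complex.norm_real, norm_norm]

theorem fα_nonneg {α : ℝ} (hα : α ≤ 1) (z : ℂ) : 0 ≤ fα α z := by
  unfold fα
  split_ifs with h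
  · have : 0 < α := Real.sqrt_pos.mp (h.1.trans h.2)
    have : 0 ≤ 1 - α := by linarith
    positivity
  · rfl

theorem measurable_fα (α : ℝ) : Measurable (fα α) := by
  unfold fα
  refine Measurable.ite ?_ (by fun_prop) measurable_const
  exact (measurableSet_lt measurable_const measurable_norm).inter
    (measurableSet_lt measurable_norm measurable_const)

theorem integrableOn_fα_ball {α b : ℝ} (hα0 : 0 < α) (hα1 : α ≤ 1) (hb : b < 1) :
    IntegrableOn (fα α) (Metric.ball 0 b) := by
  refine Measure.integrableOn_of_bounded (M := (1 - α) / (π * α * (1 - b ^ 2) ^ 2))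
    measure_ball_lt_top.ne (measurable_fα α).aestronglyMeasurable ?_
  filter_upwards [self_mem_ae_restrict measurableSet_ball] with z hz
  rw [mem_ball_zero_iff] at hz
  have hb1 : 0 < 1 - b ^ 2 := by nlinarith [norm_nonneg z]
  have hα : 0 ≤ 1 - α := by linarith
  rw [Real.norm_of_nonneg (fα_nonneg hα1 z), fα]
  split_ifs
  · gcongr
  · positivity

theorem integral_Ioo_mul_fα {α a b : ℝ} (hα0 : 0 < α) (hα1 : α < 1) (ha : 0 ≤ a) (hab : a ≤ b)
    (hb : b ≤ √α) :
    ∫ r in Ioo a b, r * fα α r = (1 - α) / (π * α) * (((1 - b ^ 2)⁻¹ - (1 - a ^ 2)⁻¹) / 2) := by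
  have hb1 : b < 1 := hb.trans_lt (by rwa [Real.sqrt_lt' one_pos, one_pow])
  rw [← integral_Ioo_div_one_sub_sq_sq (by linarith) hab hb1, ← integral_const_mul]
  refine setIntegral_congr_fun measurableSet_Ioo fun r hr => ?_
  have hr0 : 0 < r := ha.trans_lt hr.1
  have hnorm : ‖(r : ℂ)‖ = r := by rw [Complex.norm_real, Real.norm_of_nonneg hr0.le]
  rw [fα, hnorm, if_pos ⟨hr0, hr.2.trans_le hb⟩]
  field_simp

theorem integral_fα_disc_union_sector {α a b θ : ℝ} (hα0 : 0 < α) (hα1 : α < 1) (ha : 0 < a)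
    (hab : a ≤ b) (hb : b ≤ √α) (hθ0 : 0 < θ) (hθ : θ ≤ 2 * π) :
    ∫ z in polarRect (Iio a) univ ∪ polarRect (Ico a b) (sectorArgs θ), fα α z
      = (1 - α) / (π * α) *
          (((1 - a ^ 2)⁻¹ - 1) * π + ((1 - b ^ 2)⁻¹ - (1 - a ^ 2)⁻¹) / 2 * θ) := by
  have hpolar : ∀ {R Φ : Set ℝ}, MeasurableSet R → MeasurableSet Φ →
      ∫ z in polarRect R Φ, fα α z
        = (∫ r in R ∩ Ioi 0, r * fα α r) * volume.real (Φ ∩ Ioo (-π) π) := fun hR hΦ => by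
    simpa only [fα_ofReal_norm] using setIntegral_comp_norm_polarRect (fun r => fα α r) hR hΦ
  have hdisj : Disjoint (polarRect (Iio a) univ) (polarRect (Ico a b) (sectorArgs θ)) :=
    Set.disjoint_left.mpr fun z h h' => (not_lt.mpr h'.1.1) h.1
  have hb1 : b < 1 := hb.trans_lt (by rwa [Real.sqrt_lt' one_pos, one_pow])
  have hint : IntegrableOn (fα α)
      (polarRect (Iio a) univ ∪ polarRect (Ico a b) (sectorArgs θ)) := by
    refine (integrableOn_fα_ball hα0 hα1.le hb1).mono_set ?_
    rintro z (h | h) <;> rw [mem_ball_zero_iff]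
    · exact h.1.trans_le hab
    · exact h.1.2
  have hIco : Ico a b ∩ Ioi 0 = Ico a b := Set.inter_eq_left.mpr fun r hr => ha.trans_le hr.1
  rw [setIntegral_union hdisj (measurableSet_polarRect measurableSet_Ico
      (measurableSet_sectorArgs θ)) hint.left_of_union hint.right_of_union,
    hpolar measurableSet_Iio MeasurableSet.univ,
    hpolar measurableSet_Ico (measurableSet_sectorArgs θ), Iio_inter_Ioi,
    Set.univ_inter, volume_real_sectorArgs_inter hθ0 hθ,
    Real.volume_real_Ioo_of_le (by linarith [pi_pos]), hIco, integral_Ico_eq_integral_Ioo,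
    integral_Ioo_mul_fα hα0 hα1 le_rfl ha.le (hab.trans hb),
    integral_Ioo_mul_fα hα0 hα1 ha.le hab hb]
  ring

section rr

variable {n m : ℕ}

theorem rr_nonneg (i : ℕ) : 0 ≤ rr n m i := by
  unfold rr
  positivity

theorem rr_sq (hmn : m < n) (i : ℕ) : rr n m i ^ 2 = i ^ 2 / (n - m + i ^ 2) := by
  have hν : (0 : ℝ) < n - m := sub_pos.mpr (by exact_mod_cast hmn)
  rw [rr, div_pow, Real.sq_sqrt (by positivity)]

theorem rr_pos (hmn : m < n) {i : ℕ} (hi : 0 < i) : 0 < rr n m i := by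
  have hν : (0 : ℝ) < n - m := sub_pos.mpr (by exact_mod_cast hmn)
  unfold rr
  positivity

theorem rr_mono (hmn : m < n) : Monotone (rr n m) := by
  have hν : (0 : ℝ) < n - m := sub_pos.mpr (by exact_mod_cast hmn)
  refine monotone_nat_of_le_succ fun i => ?_
  rw [← pow_le_pow_iff_left₀ (rr_nonneg i) (rr_nonneg (i + 1)) two_ne_zero, rr_sq hmn,
    rr_sq hmn, div_le_div_iff₀ (by positivity) (by positivity)]
  push_cast
  have : (i : ℝ) ^ 2 ≤ (i + 1) ^ 2 := by nlinarith [i.cast_nonneg (α := ℝ)]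
  nlinarith

theorem rr_le_sqrt (hmn : m < n) {i : ℕ} (hi : (i : ℝ) ^ 2 ≤ m) : rr n m i ≤ √(m / n) := by
  have hν : (0 : ℝ) < n - m := sub_pos.mpr (by exact_mod_cast hmn)
  rw [Real.le_sqrt (rr_nonneg i) (by positivity), rr_sq hmn,
    div_le_div_iff₀ (by positivity) (by linarith)]
  nlinarith

theorem inv_one_sub_rr_sq (hmn : m < n) (i : ℕ) :
    (1 - rr n m i ^ 2)⁻¹ = 1 + (i : ℝ) ^ 2 / (n - m) := by
  have hν : (0 : ℝ) < n - m := sub_pos.mpr (by exact_mod_cast hmn)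
  rw [rr_sq hmn]
  field_simp [hν.ne']
  ring

end rr

theorem Aiθ_eq_union_polarRect (n m i : ℕ) (θ : ℝ) :
    Aiθ n m i θ = polarRect (Iio (rr n m i)) univ ∪
      polarRect (Ico (rr n m i) (rr n m (i + 1))) (sectorArgs θ) := by
  ext z
  simp only [Aiθ, polarRect, Set.mem_union, mem_ofPred_eq, Set.mem_Iio, Set.mem_Ico,
    Set.mem_univ, and_true, ← Set.mem_Ioo, argIn_mem_Ioo_iff, and_assoc]

theorem measurableSet_Aiθ (n m i : ℕ) (θ : ℝ) : MeasurableSet (Aiθ n m i θ) := by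
  rw [Aiθ_eq_union_polarRect]
  exact (measurableSet_polarRect measurableSet_Iio .univ).union
    (measurableSet_polarRect measurableSet_Ico (measurableSet_sectorArgs θ))

theorem μα_toReal {α : ℝ} (hα : α ≤ 1) {S : Set ℂ} (hS : MeasurableSet S) :
    (μα α S).toReal = ∫ z in S, fα α z := by
  rw [μα, withDensity_apply _ hS, integral_eq_lintegral_of_nonneg_ae
    (Filter.Eventually.of_forall (fα_nonneg hα)) (measurable_fα α).aestronglyMeasurable]

theorem stmt10 (n m : ℕ) (hm : 1 ≤ m) (hmn : m < n)
    (i : ℕ) (hi1 : 1 ≤ i) (hi2 : (i : ℝ) ≤ Real.sqrt m - 1)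
    (θ : ℝ) (hθ0 : 0 < θ) (hθ1 : θ ≤ 2 * Real.pi) :
    (∫ z in Aiθ n m i θ, (m : ℝ) * fα ((m : ℝ) / n) z ∂volume)
        = (i : ℝ) ^ 2 + θ / (2 * Real.pi) * (2 * (i : ℝ) + 1) ∧
    (m : ℝ) * (μα ((m : ℝ) / n) (Aiθ n m i θ)).toReal
        = (i : ℝ) ^ 2 + θ / (2 * Real.pi) * (2 * (i : ℝ) + 1) := by
  have hm0 : (0 : ℝ) < m := by exact_mod_cast hm
  have hmn' : (m : ℝ) < n := by exact_mod_cast hmn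
  have hn0 : (0 : ℝ) < n := by linarith
  have hα1 : (m : ℝ) / n < 1 := (div_lt_one hn0).mpr hmn'
  have hsucc : (((i + 1 : ℕ) : ℝ)) ^ 2 ≤ m :=
    (Real.le_sqrt (by positivity) hm0.le).mp (by push_cast; linarith)
  have hmain : ∫ z in Aiθ n m i θ, (m : ℝ) * fα ((m : ℝ) / n) z
      = (i : ℝ) ^ 2 + θ / (2 * π) * (2 * (i : ℝ) + 1) := by
    rw [integral_const_mul, Aiθ_eq_union_polarRect, integral_fα_disc_union_sector (by positivity)
      hα1 (rr_pos hmn hi1) (rr_mono hmn i.le_succ) (rr_le_sqrt hmn hsucc) hθ0 hθ1,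
      inv_one_sub_rr_sq hmn, inv_one_sub_rr_sq hmn]
    have hν : (n : ℝ) - m ≠ 0 := by linarith
    have hn : (n : ℝ) ≠ 0 := hn0.ne'
    push_cast
    field_simp
    ring
  refine ⟨hmain, ?_⟩
  rw [μα_toReal hα1.le (measurableSet_Aiθ n m i θ), ← integral_const_mul, hmain]
end
end

section
/- Let 3 ≤ m < n with α = m/n, set ε = √(2 log(m+1)/m), and assume ε < 1. Then for every real x with 0 ≤ x ≤ α(1-ε), (1-x)^{n-m+1}·∑_{p=m}^{∞} ((n-m+1)_p / p!)·x^p ≤ exp( αε − log(m+1) ) = e^{αε}/(m+1). -/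
open Finset

noncomputable section

/-- The rising Pochhammer symbol `(a)_p = a(a+1)⋯(a+p-1)`, with `(a)_0 = 1`. -/
def poch (a : ℝ) (p : ℕ) : ℝ := (ascPochhammer ℝ p).eval a

/-! Chernoff's bound for the negative binomial tail: for `x ≤ u < 1` every term of index
`q ≥ m` satisfies `x ^ q ≤ (x / u) ^ m * u ^ q`, and `∑ C(q+k, k) u ^ q = (1 - u) ^ (-(k+1))`, so
the left side is at most `((1 - x) / (1 - u)) ^ (n - m + 1) * (x / u) ^ m`. We take
`u = m / (n + 1)`, the maximiser of `(1 - u) ^ (n - m + 1) * u ^ m`. Then `log y ≤ y - 1` and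
`log (1 - ε) ≤ -ε - ε ^ 2 / 2` bound the logarithm of this by `(m / n) ε - m ε ^ 2 / 2`, and
`m ε ^ 2 / 2 = log (m + 1)` by the choice of `ε`. -/

open Real

lemma log_one_sub_le_neg_sub_sq_div_two {t : ℝ} (h0 : 0 ≤ t) (h1 : t < 1) :
    log (1 - t) ≤ -t - t ^ 2 / 2 := by
  have hs := hasSum_pow_div_log_of_abs_lt_one (abs_lt.2 ⟨by linarith, h1⟩)
  have h := sum_le_hasSum (range 2) (fun i _ => by positivity) hs
  norm_num [sum_range_succ] at h
  linarith

lemma poch_natCast_add_one_div_factorial (k q : ℕ) :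
    poch ((k : ℝ) + 1) q / (q.factorial : ℝ) = ((q + k).choose k : ℝ) := by
  rw [poch, ← Nat.cast_succ, ← Nat.cast_ascFactorial, Nat.ascFactorial_eq_factorial_mul_choose,
    Nat.add_comm k q, Nat.choose_symm_add]
  push_cast
  field_simp

lemma tsum_tail_mul_pow_le {a : ℕ → ℝ} (ha : ∀ q, 0 ≤ a q) {u x S : ℝ}
    (hS : HasSum (fun q => a q * u ^ q) S) (hu : 0 < u) (hx : 0 ≤ x) (hxu : x ≤ u) (m : ℕ) :
    ∑' p, a (m + p) * x ^ (m + p) ≤ (x / u) ^ m * S := by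
  have htail : Summable fun p => a (m + p) * u ^ (m + p) :=
    hS.summable.comp_injective (add_right_injective m)
  have hterm : ∀ p, a (m + p) * x ^ (m + p) ≤ (x / u) ^ m * (a (m + p) * u ^ (m + p)) := by
    intro p
    have hpow : x ^ (m + p) ≤ (x / u) ^ m * u ^ (m + p) := by
      rw [div_pow, pow_add, pow_add, div_mul_eq_mul_div, mul_div_assoc, mul_div_cancel_left₀ _
        (pow_pos hu m).ne']
      gcongr
    calc a (m + p) * x ^ (m + p) ≤ a (m + p) * ((x / u) ^ m * u ^ (m + p)) := by gcongr; exact ha _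
      _ = _ := by ring
  calc ∑' p, a (m + p) * x ^ (m + p)
      ≤ ∑' p, (x / u) ^ m * (a (m + p) * u ^ (m + p)) :=
        Summable.tsum_le_tsum hterm
          (.of_nonneg_of_le (fun p => by have := ha (m + p); positivity) hterm
            (htail.mul_left _))
          (htail.mul_left _)
    _ = (x / u) ^ m * ∑' p, a (m + p) * u ^ (m + p) := tsum_mul_left
    _ ≤ (x / u) ^ m * S := by
        rw [← hS.tsum_eq]
        refine mul_le_mul_of_nonneg_left ?_ (by positivity)
        exact htail.tsum_le_tsum_of_inj (m + ·) (add_right_injective m)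
          (fun q _ => by have := ha q; positivity) (fun _ => le_rfl) hS.summable

lemma one_sub_pow_mul_tsum_choose_le (k m : ℕ) {u x : ℝ} (hu0 : 0 < u) (hu1 : u < 1)
    (hx : 0 ≤ x) (hxu : x ≤ u) :
    (1 - x) ^ (k + 1) * ∑' p, ((m + p + k).choose k : ℝ) * x ^ (m + p)
      ≤ ((1 - x) / (1 - u)) ^ (k + 1) * (x / u) ^ m := by
  have hS := hasSum_choose_mul_geometric_of_norm_lt_one k (r := u)
    (by rwa [norm_of_nonneg hu0.le])
  calc (1 - x) ^ (k + 1) * ∑' p, ((m + p + k).choose k : ℝ) * x ^ (m + p)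
      ≤ (1 - x) ^ (k + 1) * ((x / u) ^ m * (1 / (1 - u) ^ (k + 1))) :=
        mul_le_mul_of_nonneg_left
          (tsum_tail_mul_pow_le (fun _ => Nat.cast_nonneg _) hS hu0 hx hxu m)
          (pow_nonneg (by linarith) _)
    _ = ((1 - x) / (1 - u)) ^ (k + 1) * (x / u) ^ m := by rw [div_pow (1 - x)]; ring

lemma one_le_sqrt_two_mul_log_div_mul {m n : ℕ} (hm : 0 < m) (hmn : m < n) :
    1 ≤ √(2 * log ((m : ℝ) + 1) / m) * ((n : ℝ) + 1) := by
  have hM : (1 : ℝ) ≤ m := by exact_mod_cast hm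
  have hMN : (m : ℝ) + 1 ≤ n := by exact_mod_cast hmn
  have hlog : 1 ≤ 2 * log ((m : ℝ) + 1) := by
    have := log_le_log (by norm_num : (0 : ℝ) < 2) (by linarith : (2 : ℝ) ≤ m + 1)
    linarith [log_two_gt_d9]
  have hsq : (1 / ((n : ℝ) + 1)) ^ 2 ≤ 2 * log ((m : ℝ) + 1) / m := by
    rw [div_pow, one_pow, div_le_div_iff₀ (by positivity) (by positivity)]
    nlinarith
  rw [← div_le_iff₀ (by positivity)]
  exact le_sqrt_of_sq_le hsq

lemma div_mul_one_sub_le_div_add_one {M N ε : ℝ} (hM : 0 ≤ M) (hN : 0 < N)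
    (hεN : 1 ≤ ε * (N + 1)) : M / N * (1 - ε) ≤ M / (N + 1) := by
  rw [← sub_nonneg]
  have : M / (N + 1) - M / N * (1 - ε) = M / (N * (N + 1)) * (ε * (N + 1) - 1) := by
    field_simp; ring
  rw [this]
  exact mul_nonneg (by positivity) (by linarith)

lemma log_chernoff_bound_le {M N ε x : ℝ} (hM : 0 < M) (hMN : M < N) (hε1 : ε < 1)
    (hεN : 1 ≤ ε * (N + 1)) (hx0 : 0 < x) (hx : x ≤ M / N * (1 - ε)) :
    (N - M + 1) * log ((1 - x) / (1 - M / (N + 1))) + M * log (x / (M / (N + 1)))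
      ≤ M / N * ε - M * ε ^ 2 / 2 := by
  have hN : 0 < N := by linarith
  set u := M / (N + 1) with hu
  set x0 := M / N * (1 - ε) with hx0_def
  have hx0_pos : 0 < x0 := mul_pos (div_pos hM hN) (by linarith)
  have hx0u : (N + 1) * x0 ≤ M := by
    rw [mul_comm, ← le_div_iff₀ (by linarith)]
    exact div_mul_one_sub_le_div_add_one hM.le hN hεN
  have hk : N - M + 1 ≠ 0 := by linarith
  have h1u : 1 - u = (N - M + 1) / (N + 1) := by rw [hu]; field_simp; ring
  have h1x : 0 < 1 - x := by
    have : x0 < 1 := by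
      have := (div_lt_one hN).2 hMN
      nlinarith
    linarith
  have h_one_sub : (N - M + 1) * log ((1 - x) / (1 - u)) ≤ M - (N + 1) * x :=
    calc (N - M + 1) * log ((1 - x) / (1 - u)) ≤ (N - M + 1) * ((1 - x) / (1 - u) - 1) :=
          mul_le_mul_of_nonneg_left (log_le_sub_one_of_pos (by rw [h1u]; positivity))
            (by linarith)
      _ = M - (N + 1) * x := by rw [h1u]; field_simp; ring
  have h_below_x0 : M * log (x / x0) ≤ (N + 1) * (x - x0) :=
    calc M * log (x / x0) ≤ M * (x / x0 - 1) :=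
          mul_le_mul_of_nonneg_left (log_le_sub_one_of_pos (by positivity)) hM.le
      _ = M / x0 * (x - x0) := by field_simp
      _ ≤ (N + 1) * (x - x0) :=
          mul_le_mul_of_nonpos_right (by rw [le_div_iff₀ hx0_pos]; linarith) (by linarith)
  have h_x0_over_u : M * log (x0 / u) ≤ M * (-ε - ε ^ 2 / 2) + M / N := by
    have hsplit : x0 / u = (1 - ε) * ((N + 1) / N) := by rw [hx0_def, hu]; field_simp
    have hN1 : log ((N + 1) / N) ≤ 1 / N := by
      have := log_le_sub_one_of_pos (show 0 < (N + 1) / N by positivity)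
      rwa [show (N + 1) / N - 1 = 1 / N by field_simp; ring] at this
    have h_one_sub_ε : log (1 - ε) ≤ -ε - ε ^ 2 / 2 := log_one_sub_le_neg_sub_sq_div_two (by nlinarith) hε1
    rw [hsplit, log_mul (by linarith) (by positivity), mul_add, ← mul_one_div M N]
    gcongr
  have hu_pos : 0 < u := by positivity
  have hlog_split : log (x / u) = log (x / x0) + log (x0 / u) := by
    rw [← log_mul (by positivity) (by positivity)]
    field_simp
  have hval : M - (N + 1) * x0 + M * (-ε - ε ^ 2 / 2) + M / N = M / N * ε - M * ε ^ 2 / 2 := by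
    rw [hx0_def]; field_simp; ring
  rw [hlog_split, mul_add]
  linarith

lemma chernoff_bound_le_exp {m n : ℕ} (hm : 0 < m) (hmn : m < n) {ε x : ℝ} (hε1 : ε < 1)
    (hεN : 1 ≤ ε * ((n : ℝ) + 1)) (hx0 : 0 ≤ x) (hx : x ≤ (m : ℝ) / n * (1 - ε)) :
    ((1 - x) / (1 - m / ((n : ℝ) + 1))) ^ (n - m + 1) * (x / (m / ((n : ℝ) + 1))) ^ m
      ≤ exp ((m : ℝ) / n * ε - m * ε ^ 2 / 2) := by
  rcases hx0.eq_or_lt with rfl | hx_pos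
  · simp [zero_pow hm.ne', (exp_pos _).le]
  have hM : (0 : ℝ) < m := by exact_mod_cast hm
  have hMN : (m : ℝ) < n := by exact_mod_cast hmn
  have hε0 : 0 < ε := by nlinarith
  have h1x : 0 < 1 - x := by
    have : (m : ℝ) / n < 1 := (div_lt_one (by linarith)).2 hMN
    nlinarith
  have h1u : 0 < 1 - m / ((n : ℝ) + 1) := by rw [sub_pos, div_lt_one (by linarith)]; linarith
  rw [← log_le_iff_le_exp (by positivity), log_mul (by positivity) (by positivity), log_pow,
    log_pow, Nat.cast_add_one, Nat.cast_sub hmn.le]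
  exact log_chernoff_bound_le hM hMN hε1 hεN hx_pos hx

theorem stmt15 (n m : ℕ) (hm : 3 ≤ m) (hmn : m < n)
    (ε : ℝ) (hε : ε = Real.sqrt (2 * Real.log ((m : ℝ) + 1) / m)) (hε1 : ε < 1)
    (x : ℝ) (hx0 : 0 ≤ x) (hx1 : x ≤ ((m : ℝ) / n) * (1 - ε)) :
    (1 - x) ^ (n - m + 1) *
        ∑' p : ℕ, poch ((n : ℝ) - m + 1) (m + p) / (Nat.factorial (m + p)) * x ^ (m + p)
      ≤ Real.exp (((m : ℝ) / n) * ε - Real.log ((m : ℝ) + 1)) := by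
  have hm0 : 0 < m := by omega
  have hMN : (m : ℝ) < n := by exact_mod_cast hmn
  have hεN : 1 ≤ ε * ((n : ℝ) + 1) := hε ▸ one_le_sqrt_two_mul_log_div_mul hm0 hmn
  have hlog : log ((m : ℝ) + 1) = m * ε ^ 2 / 2 := by
    have : 0 ≤ log ((m : ℝ) + 1) := log_nonneg (le_add_of_nonneg_left (Nat.cast_nonneg m))
    rw [hε, sq_sqrt (by positivity)]
    field_simp
  have hu0 : 0 < (m : ℝ) / (n + 1) := by positivity
  have hu1 : (m : ℝ) / (n + 1) < 1 := by rw [div_lt_one (by positivity)]; linarith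
  have hxu : x ≤ m / ((n : ℝ) + 1) :=
    hx1.trans (div_mul_one_sub_le_div_add_one (Nat.cast_nonneg m) (by linarith) hεN)
  have hpoch : (n : ℝ) - m + 1 = ((n - m : ℕ) : ℝ) + 1 := by rw [Nat.cast_sub hmn.le]
  calc (1 - x) ^ (n - m + 1) *
        ∑' p : ℕ, poch ((n : ℝ) - m + 1) (m + p) / (Nat.factorial (m + p)) * x ^ (m + p)
      = (1 - x) ^ (n - m + 1) * ∑' p, ((m + p + (n - m)).choose (n - m) : ℝ) * x ^ (m + p) := by
        simp_rw [hpoch, poch_natCast_add_one_div_factorial]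
    _ ≤ ((1 - x) / (1 - m / ((n : ℝ) + 1))) ^ (n - m + 1) * (x / (m / ((n : ℝ) + 1))) ^ m :=
        one_sub_pow_mul_tsum_choose_le _ _ hu0 hu1 hx0 hxu
    _ ≤ exp ((m : ℝ) / n * ε - m * ε ^ 2 / 2) := chernoff_bound_le_exp hm0 hmn hε1 hεN hx0 hx1
    _ = exp ((m : ℝ) / n * ε - log ((m : ℝ) + 1)) := by rw [hlog]
end
end
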